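/- arXiv:1505.01889 — 3 statements merged into one kernel-verified Lean document; each statement's English description precedes it below -/
import Mathlib

section
/- Let T be a tree on n ≥ 4 vertices with two centroids, let e₁ be the edge connecting the two centroids, and let e_i ≠ e_j be two other edges. If e_i and e_j lie in the same connected component of T − e₁, then θ_T({e₁, e_i, e_j}) has exactly one part equal to n/2 (and the other three parts strictly less than n/2); if e_i and e_j lie in different components of T − e₁, then all four parts of θ_T({e₁, e_i, e_j}) are strictly less than n/2. -/
open SimpleGraph

/-- The multiset of connected component sizes of a graph on a finite vertex type. -/
noncomputable def compSizes {V : Type*} [Fintype V] (G : SimpleGraph V) : Multiset ℕ :=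
  haveI : Fintype G.ConnectedComponent := Fintype.ofFinite _
  (Finset.univ : Finset G.ConnectedComponent).val.map fun c => Nat.card c.supp

/-- θ_T(S): the multiset of component sizes of T with the edges in S deleted. -/
noncomputable def theta {V : Type*} [Fintype V] (T : SimpleGraph V) (S : Finset (Sym2 V)) :
    Multiset ℕ :=
  compSizes (T.deleteEdges ↑S)

/-- The weight of a vertex: the maximal size of a connected component of T − v. -/
noncomputable def vertexWeight {V : Type*} [Fintype V] (G : SimpleGraph V) (v : V) : ℕ :=
  haveI : Fintype ((G.induce ({v}ᶜ : Set V)).ConnectedComponent) := Fintype.ofFinite _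
  (Finset.univ : Finset ((G.induce ({v}ᶜ : Set V)).ConnectedComponent)).sup
    fun c => Nat.card c.supp

/-- A centroid is a vertex of minimum weight. -/
def IsCentroid {V : Type*} [Fintype V] (G : SimpleGraph V) (c : V) : Prop :=
  ∀ u : V, vertexWeight G c ≤ vertexWeight G u

/-!
Deleting the central edge `s(c₁, c₂)` splits the tree into two components, and each has `n / 2`
vertices: for an edge `ab`, the component of `T - b` through `a` is the `a`-side of `ab`, while
every component of `T - a` lies in the `b`-side or in the `a`-side minus `a`, so a centroid `b`
forces the `a`-side to be no larger than the `b`-side. Deleting a further edge inside a side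
strictly shrinks every piece of that side, because tree edges are bridges, while a side none of
whose edges is deleted survives as a component of size `n / 2`.
-/

theorem Multiset.count_map_univ_eq_one_of_lt {α : Type*} [Fintype α] (f : α → ℕ) (a₀ : α)
    (h : ∀ a ≠ a₀, f a < f a₀) :
    (Finset.univ.val.map f).count (f a₀) = 1 ∧
      ∀ m ∈ (Finset.univ.val.map f).erase (f a₀), m < f a₀ := by
  classical
  have hrest : ∀ m ∈ (Finset.univ.erase a₀).val.map f, m < f a₀ := by
    simp only [Multiset.mem_map, Finset.mem_val, Finset.mem_erase]
    rintro _ ⟨a, ⟨ha, -⟩, rfl⟩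
    exact h a ha
  rw [← Finset.insert_erase (Finset.mem_univ a₀),
    Finset.insert_val_of_notMem (Finset.notMem_erase _ _), Multiset.map_cons,
    Multiset.count_cons_self, Multiset.erase_cons_head,
    Multiset.count_eq_zero.mpr fun hm => (hrest _ hm).false]
  exact ⟨rfl, hrest⟩

namespace SimpleGraph

section General

variable {V W : Type*} {G : SimpleGraph V}

lemma ConnectedComponent.supp_subset_supp_map_ofLE {H : SimpleGraph V} (h : G ≤ H)
    (c : G.ConnectedComponent) : c.supp ⊆ (c.map (Hom.ofLE h)).supp := by
  rintro v rfl
  rfl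

lemma ConnectedComponent.image_supp_subset_supp_map {H : SimpleGraph W} (φ : G →g H)
    (c : G.ConnectedComponent) : φ '' c.supp ⊆ (c.map φ).supp := by
  rintro _ ⟨v, rfl, rfl⟩
  rfl

lemma Connected.card_le_card_supp_connectedComponentMk [Finite W] {H : SimpleGraph W}
    (hG : G.Connected) (φ : G →g H) (hφ : Function.Injective φ) (v : V) :
    Nat.card V ≤ Nat.card (H.connectedComponentMk (φ v)).supp :=
  Nat.card_le_card_of_injective
    (fun w => ⟨φ w, ConnectedComponent.sound ((hG.preconnected w v).map φ)⟩)
    (fun _ _ h => hφ (congrArg Subtype.val h))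

lemma ConnectedComponent.exists_supp_deleteEdges_eq (c : G.ConnectedComponent)
    {S : Set (Sym2 V)} (hS : ∀ e ∈ S, ∀ v ∈ e, v ∉ c.supp) :
    ∃ c' : (G.deleteEdges S).ConnectedComponent, c'.supp = c.supp := by
  classical
  obtain ⟨v, rfl⟩ := c.exists_rep
  refine ⟨_, (connectedComponentMk_supp_subset_supp (deleteEdges_le S) _ rfl).antisymm ?_⟩
  intro u (hu : G.connectedComponentMk u = _)
  obtain ⟨p⟩ := ConnectedComponent.exact hu
  refine ConnectedComponent.sound ⟨p.toDeleteEdges S fun e hep heS => ?_⟩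
  have hx := Walk.mem_support_of_mem_edges hep e.out_fst_mem
  exact hS e heS _ e.out_fst_mem
    ((ConnectedComponent.sound (p.takeUntil _ hx).reachable).symm.trans hu)

lemma Preconnected.reachable_deleteEdges_or (hG : G.Preconnected) (a b v : V) :
    (G.deleteEdges {s(a, b)}).Reachable v a ∨ (G.deleteEdges {s(a, b)}).Reachable v b := by
  obtain ⟨p⟩ := hG v a
  induction p with
  | nil => exact Or.inl .rfl
  | @cons v w a hvw _ ih =>
    by_cases hv : v = a ∨ v = b
    · rcases hv with rfl | rfl
      exacts [Or.inl .rfl, Or.inr .rfl]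
    · have hvw' : (G.deleteEdges {s(a, b)}).Adj v w := by
        simp only [deleteEdges_adj, Set.mem_singleton_iff, Sym2.eq_iff]
        tauto
      exact ih.imp hvw'.reachable.trans hvw'.reachable.trans

lemma Preconnected.eq_or_eq_connectedComponentMk_deleteEdges (hG : G.Preconnected) (a b : V)
    (c : (G.deleteEdges {s(a, b)}).ConnectedComponent) :
    c = (G.deleteEdges {s(a, b)}).connectedComponentMk a ∨
      c = (G.deleteEdges {s(a, b)}).connectedComponentMk b :=
  c.ind fun v => (hG.reachable_deleteEdges_or a b v).imp
    ConnectedComponent.sound ConnectedComponent.sound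

lemma Preconnected.eq_or_eq_of_ne_of_deleteEdges (hG : G.Preconnected) {a b : V}
    {X Y : (G.deleteEdges {s(a, b)}).ConnectedComponent} (hXY : X ≠ Y) (Z) : Z = X ∨ Z = Y := by
  rcases hG.eq_or_eq_connectedComponentMk_deleteEdges a b X with rfl | rfl <;>
  rcases hG.eq_or_eq_connectedComponentMk_deleteEdges a b Y with rfl | rfl <;>
  rcases hG.eq_or_eq_connectedComponentMk_deleteEdges a b Z with rfl | rfl <;>
  simp_all

lemma IsAcyclic.not_reachable_deleteEdges (hG : G.IsAcyclic) {S : Set (Sym2 V)} {u v : V}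
    (huv : G.Adj u v) (hS : s(u, v) ∈ S) : ¬ (G.deleteEdges S).Reachable u v := fun h =>
  isAcyclic_iff_forall_adj_isBridge.mp hG huv
    (h.mono (deleteEdges_anti (Set.singleton_subset_iff.mpr hS)))

lemma IsAcyclic.connectedComponentMk_deleteEdges_ne (hG : G.IsAcyclic) {a b : V}
    (hab : G.Adj a b) :
    (G.deleteEdges {s(a, b)}).connectedComponentMk a ≠
      (G.deleteEdges {s(a, b)}).connectedComponentMk b := fun h =>
  hG.not_reachable_deleteEdges hab (Set.mem_singleton _) (ConnectedComponent.exact h)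

lemma IsAcyclic.card_supp_lt_of_map_eq [Finite V] (hG : G.IsAcyclic) {S : Set (Sym2 V)}
    {u v : V} (huv : G.Adj u v) (hS : s(u, v) ∈ S) (c : (G.deleteEdges S).ConnectedComponent)
    {X : G.ConnectedComponent} (hcX : c.map (Hom.ofLE (deleteEdges_le S)) = X)
    (hu : u ∈ X.supp) : Nat.card c.supp < Nat.card X.supp := by
  have hsub := hcX ▸ c.supp_subset_supp_map_ofLE (deleteEdges_le S)
  rw [Nat.card_coe_set_eq, Nat.card_coe_set_eq]
  refine (Set.ncard_le_ncard hsub).lt_of_ne fun heq => ?_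
  have hcX' := Set.eq_of_subset_of_ncard_le hsub heq.ge
  exact hG.not_reachable_deleteEdges huv hS <|
    c.reachable_of_mem_supp (hcX' ▸ hu) (hcX' ▸ X.mem_supp_of_adj_mem_supp hu huv)

end General

section Finite

variable {V : Type*} [Fintype V] {G : SimpleGraph V}

lemma count_compSizes_eq_one (c₀ : G.ConnectedComponent)
    (h : ∀ c ≠ c₀, Nat.card c.supp < Nat.card c₀.supp) :
    (compSizes G).count (Nat.card c₀.supp) = 1 ∧
      ∀ m ∈ (compSizes G).erase (Nat.card c₀.supp), m < Nat.card c₀.supp := by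
  let _ : Fintype G.ConnectedComponent := Fintype.ofFinite _
  exact Multiset.count_map_univ_eq_one_of_lt _ c₀ h

lemma lt_of_mem_compSizes {k : ℕ} (h : ∀ c : G.ConnectedComponent, Nat.card c.supp < k) :
    ∀ m ∈ compSizes G, m < k := by
  intro m hm
  obtain ⟨c, -, rfl⟩ := Multiset.mem_map.mp hm
  exact h c

lemma ConnectedComponent.card_supp_le_vertexWeight {v : V}
    (c : (G.induce ({v}ᶜ : Set V)).ConnectedComponent) :
    Nat.card c.supp ≤ vertexWeight G v := by
  let _ : Fintype (G.induce ({v}ᶜ : Set V)).ConnectedComponent := Fintype.ofFinite _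
  exact Finset.le_sup (f := fun c : (G.induce ({v}ᶜ : Set V)).ConnectedComponent =>
    Nat.card c.supp) (Finset.mem_univ c)

lemma vertexWeight_le {v : V} {k : ℕ}
    (h : ∀ c : (G.induce ({v}ᶜ : Set V)).ConnectedComponent, Nat.card c.supp ≤ k) :
    vertexWeight G v ≤ k := by
  let _ : Fintype (G.induce ({v}ᶜ : Set V)).ConnectedComponent := Fintype.ofFinite _
  exact Finset.sup_le fun c _ => h c

lemma IsAcyclic.card_supp_le_vertexWeight (hG : G.IsAcyclic) {a b : V} (hab : G.Adj a b) :
    Nat.card ((G.deleteEdges {s(a, b)}).connectedComponentMk b).supp ≤ vertexWeight G a := by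
  set C := (G.deleteEdges {s(a, b)}).connectedComponentMk b
  have ha : a ∉ C.supp := hG.connectedComponentMk_deleteEdges_ne hab
  let ψ : C.toSimpleGraph →g G.induce ({a}ᶜ : Set V) :=
    { toFun := fun v =>
        ⟨v, fun h => ha (Eq.subst (motive := (· ∈ C.supp)) (Set.mem_singleton_iff.mp h) v.2)⟩
      map_rel' := fun h => G.deleteEdges_le {s(a, b)} h }
  exact (C.connected_toSimpleGraph.card_le_card_supp_connectedComponentMk ψ
    (fun v w h => Subtype.ext (congrArg Subtype.val h :)) ⟨b, rfl⟩).trans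
    (ConnectedComponent.card_supp_le_vertexWeight _)

lemma Preconnected.vertexWeight_le_max (hG : G.Preconnected) (a b : V) :
    vertexWeight G a ≤ max (Nat.card ((G.deleteEdges {s(a, b)}).connectedComponentMk b).supp)
      (Nat.card ((G.deleteEdges {s(a, b)}).connectedComponentMk a).supp - 1) := by
  let φ : G.induce ({a}ᶜ : Set V) →g G.deleteEdges {s(a, b)} :=
    { toFun := Subtype.val
      map_rel' := fun {v w} h => (deleteEdges_adj ..).mpr ⟨h, fun he => by
        rcases Sym2.eq_iff.mp he with ⟨hv, -⟩ | ⟨-, hw⟩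
        exacts [v.2 hv, w.2 hw]⟩ }
  refine vertexWeight_le fun D => ?_
  have hD : Nat.card D.supp ≤ ((D.map φ).supp \ {a}).ncard := by
    rw [Nat.card_coe_set_eq,
      ← Set.ncard_image_of_injective D.supp (f := φ) Subtype.val_injective]
    refine Set.ncard_le_ncard (Set.subset_sdiff.mpr ⟨D.image_supp_subset_supp_map φ, ?_⟩)
    exact Set.disjoint_singleton_right.mpr fun ⟨v, _, hv⟩ => v.2 hv
  rcases hG.eq_or_eq_connectedComponentMk_deleteEdges a b (D.map φ) with h | h <;>
    rw [h] at hD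
  · have ha : a ∈ ((G.deleteEdges {s(a, b)}).connectedComponentMk a).supp := rfl
    rw [Set.ncard_sdiff_singleton_of_mem ha, ← Nat.card_coe_set_eq] at hD
    exact le_max_of_le_right hD
  · rw [Nat.card_coe_set_eq]
    exact le_max_of_le_left (hD.trans (Set.ncard_sdiff_singleton_le _ _))

lemma IsTree.card_supp_le_of_isCentroid (hG : G.IsTree) {a b : V} (hab : G.Adj a b)
    (hb : IsCentroid G b) :
    Nat.card ((G.deleteEdges {s(a, b)}).connectedComponentMk a).supp ≤
      Nat.card ((G.deleteEdges {s(a, b)}).connectedComponentMk b).supp := by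
  have hlow := hG.isAcyclic.card_supp_le_vertexWeight hab.symm
  rw [Sym2.eq_swap] at hlow
  have hup := hG.connected.preconnected.vertexWeight_le_max a b
  have := hb a
  omega

lemma IsTree.card_supp_add_card_supp (hG : G.IsTree) {a b : V} (hab : G.Adj a b) :
    Nat.card ((G.deleteEdges {s(a, b)}).connectedComponentMk a).supp +
      Nat.card ((G.deleteEdges {s(a, b)}).connectedComponentMk b).supp = Fintype.card V := by
  have hcover : ((G.deleteEdges {s(a, b)}).connectedComponentMk a).supp ∪
      ((G.deleteEdges {s(a, b)}).connectedComponentMk b).supp = Set.univ :=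
    Set.eq_univ_of_forall fun v =>
      (hG.connected.preconnected.reachable_deleteEdges_or a b v).imp
        ConnectedComponent.sound ConnectedComponent.sound
  rw [Nat.card_coe_set_eq, Nat.card_coe_set_eq,
    ← Set.ncard_union_eq (pairwise_disjoint_supp_connectedComponent _
      (hG.isAcyclic.connectedComponentMk_deleteEdges_ne hab)), hcover,
    Set.ncard_univ, Nat.card_eq_fintype_card]

lemma IsTree.card_supp_deleteEdges_eq_half (hG : G.IsTree) {a b : V} (hab : G.Adj a b)
    (ha : IsCentroid G a) (hb : IsCentroid G b)
    (c : (G.deleteEdges {s(a, b)}).ConnectedComponent) :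
    Nat.card c.supp = Fintype.card V / 2 := by
  have hle := hG.card_supp_le_of_isCentroid hab hb
  have hge := hG.card_supp_le_of_isCentroid hab.symm ha
  rw [Sym2.eq_swap] at hge
  have hsum := hG.card_supp_add_card_supp hab
  rcases hG.connected.preconnected.eq_or_eq_connectedComponentMk_deleteEdges a b c
    with rfl | rfl <;> omega

variable {H : SimpleGraph V} {k : ℕ} {ui vi uj vj : V}

lemma IsAcyclic.lt_of_mem_compSizes_deleteEdges (hH : H.IsAcyclic)
    (htwo : ∀ {X Y : H.ConnectedComponent}, X ≠ Y → ∀ Z, Z = X ∨ Z = Y)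
    (hk : ∀ c : H.ConnectedComponent, Nat.card c.supp = k) (hi : H.Adj ui vi)
    (hj : H.Adj uj vj) (hij : H.connectedComponentMk ui ≠ H.connectedComponentMk uj) :
    ∀ m ∈ compSizes (H.deleteEdges {s(ui, vi), s(uj, vj)}), m < k := by
  refine lt_of_mem_compSizes fun c => ?_
  rcases htwo hij (c.map (Hom.ofLE (deleteEdges_le _))) with h | h
  · exact (hH.card_supp_lt_of_map_eq hi (by simp) c h rfl).trans_eq (hk _)
  · exact (hH.card_supp_lt_of_map_eq hj (by simp) c h rfl).trans_eq (hk _)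

lemma IsAcyclic.count_compSizes_deleteEdges_eq_one (hH : H.IsAcyclic)
    (htwo : ∀ {X Y : H.ConnectedComponent}, X ≠ Y → ∀ Z, Z = X ∨ Z = Y)
    (hk : ∀ c : H.ConnectedComponent, Nat.card c.supp = k) (hi : H.Adj ui vi)
    (hj : H.Adj uj vj) (hij : H.connectedComponentMk ui = H.connectedComponentMk uj)
    {Z : H.ConnectedComponent} (hZ : Z ≠ H.connectedComponentMk ui) :
    (compSizes (H.deleteEdges {s(ui, vi), s(uj, vj)})).count k = 1 ∧
      ∀ m ∈ (compSizes (H.deleteEdges {s(ui, vi), s(uj, vj)})).erase k, m < k := by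
  have hside : ∀ e ∈ ({s(ui, vi), s(uj, vj)} : Set (Sym2 V)), ∀ v ∈ e,
      H.connectedComponentMk v = H.connectedComponentMk ui := by
    rintro e (rfl | rfl) v hv <;> rcases Sym2.mem_iff.mp hv with rfl | rfl
    · rfl
    · exact (ConnectedComponent.connectedComponentMk_eq_of_adj hi).symm
    · exact hij.symm
    · exact (ConnectedComponent.connectedComponentMk_eq_of_adj hj).symm.trans hij.symm
  obtain ⟨c₀, hc₀⟩ := Z.exists_supp_deleteEdges_eq fun e he v hv hvZ =>
    hZ (hvZ.symm.trans (hside e he v hv))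
  have hc₀k : Nat.card c₀.supp = k := hc₀ ▸ hk Z
  subst hc₀k
  refine count_compSizes_eq_one c₀ fun c hc => ?_
  rcases htwo hZ (c.map (Hom.ofLE (deleteEdges_le _))) with h | h
  · obtain ⟨v, hv⟩ := c.nonempty_supp
    have hv₀ : v ∈ c₀.supp := hc₀ ▸ h ▸ c.supp_subset_supp_map_ofLE _ hv
    exact absurd (ConnectedComponent.eq_of_common_vertex hv hv₀) hc
  · exact (hH.card_supp_lt_of_map_eq hi (by simp) c h rfl).trans_eq (hk _)

end Finite

end SimpleGraph

theorem stmt7_general {V : Type*} [Fintype V] [DecidableEq V] (T : SimpleGraph V) (hT : T.IsTree)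
    (c₁ c₂ : V) (h₁ : IsCentroid T c₁) (h₂ : IsCentroid T c₂)
    (hadj : T.Adj c₁ c₂)
    (ei ej : Sym2 V) (hei : ei ∈ T.edgeSet) (hej : ej ∈ T.edgeSet)
    (hei1 : ei ≠ s(c₁, c₂)) (hej1 : ej ≠ s(c₁, c₂)) :
    ((∀ u ∈ ei, ∀ v ∈ ej, (T.deleteEdges {s(c₁, c₂)}).Reachable u v) →
      ((theta T ({s(c₁, c₂), ei, ej} : Finset (Sym2 V))).count (Fintype.card V / 2) = 1 ∧
        ∀ m ∈ (theta T ({s(c₁, c₂), ei, ej} : Finset (Sym2 V))).erase (Fintype.card V / 2),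
          m < Fintype.card V / 2)) ∧
    ((∀ u ∈ ei, ∀ v ∈ ej, ¬ (T.deleteEdges {s(c₁, c₂)}).Reachable u v) →
      ∀ m ∈ theta T ({s(c₁, c₂), ei, ej} : Finset (Sym2 V)), m < Fintype.card V / 2) := by
  induction ei using Sym2.ind with | _ ui vi =>
  induction ej using Sym2.ind with | _ uj vj =>
  set H := T.deleteEdges {s(c₁, c₂)}
  have hθ : theta T {s(c₁, c₂), s(ui, vi), s(uj, vj)} =
      compSizes (H.deleteEdges {s(ui, vi), s(uj, vj)}) := by
    rw [theta, deleteEdges_deleteEdges]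
    congr 2
    ext
    simp only [Finset.coe_insert, Finset.coe_singleton, Set.mem_insert_iff,
      Set.mem_singleton_iff, Set.mem_union]
  have hH : H.IsAcyclic := hT.isAcyclic.anti (deleteEdges_le _)
  have hpre := hT.connected.preconnected
  have hk := hT.card_supp_deleteEdges_eq_half hadj h₁ h₂
  have hi : H.Adj ui vi := (deleteEdges_adj ..).mpr ⟨hei, hei1⟩
  have hj : H.Adj uj vj := (deleteEdges_adj ..).mpr ⟨hej, hej1⟩
  rw [hθ]
  refine ⟨fun hsame => ?_, fun hdiff =>
    hH.lt_of_mem_compSizes_deleteEdges hpre.eq_or_eq_of_ne_of_deleteEdges hk hi hj fun h =>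
      hdiff ui (Sym2.mem_mk_left _ _) uj (Sym2.mem_mk_left _ _) (ConnectedComponent.exact h)⟩
  have := nontrivial_of_ne _ _ (hT.isAcyclic.connectedComponentMk_deleteEdges_ne hadj)
  obtain ⟨Z, hZ⟩ := exists_ne (H.connectedComponentMk ui)
  exact hH.count_compSizes_deleteEdges_eq_one hpre.eq_or_eq_of_ne_of_deleteEdges hk hi hj
    (ConnectedComponent.sound (hsame ui (Sym2.mem_mk_left _ _) uj (Sym2.mem_mk_left _ _))) hZ

/-- Lemma: in a double-centroid tree with central edge `e₁ = s(c₁,c₂)`, for any two other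
distinct edges `eᵢ ≠ eⱼ`: if they lie in the same component of `T − e₁` then
`θ_T({e₁,eᵢ,eⱼ})` has exactly one part `n/2` with the other three parts `< n/2`; if they lie
in different components then all four parts are `< n/2`. -/
theorem stmt7 {V : Type*} [Fintype V] [DecidableEq V] (T : SimpleGraph V) (hT : T.IsTree)
    (hn : 4 ≤ Fintype.card V) (c₁ c₂ : V) (h₁ : IsCentroid T c₁) (h₂ : IsCentroid T c₂)
    (hne : c₁ ≠ c₂) (hadj : T.Adj c₁ c₂)
    (ei ej : Sym2 V) (hei : ei ∈ T.edgeSet) (hej : ej ∈ T.edgeSet)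
    (hij : ei ≠ ej) (hei1 : ei ≠ s(c₁, c₂)) (hej1 : ej ≠ s(c₁, c₂)) :
    ((∀ u ∈ ei, ∀ v ∈ ej, (T.deleteEdges {s(c₁, c₂)}).Reachable u v) →
      ((theta T ({s(c₁, c₂), ei, ej} : Finset (Sym2 V))).count (Fintype.card V / 2) = 1 ∧
        ∀ m ∈ (theta T ({s(c₁, c₂), ei, ej} : Finset (Sym2 V))).erase (Fintype.card V / 2),
          m < Fintype.card V / 2)) ∧
    ((∀ u ∈ ei, ∀ v ∈ ej, ¬ (T.deleteEdges {s(c₁, c₂)}).Reachable u v) →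
      ∀ m ∈ theta T ({s(c₁, c₂), ei, ej} : Finset (Sym2 V)), m < Fintype.card V / 2) :=
  stmt7_general T hT c₁ c₂ h₁ h₂ hadj ei ej hei hej hei1 hej1
end

section
/- Let T be a tree on n vertices, S a set of k−1 edges with k ≤ n − 3, and suppose the partition θ_T(S ∪ {ℓ}) is the same for every leaf edge ℓ of the forest T − S. Then all components of T − S with more than one vertex have the same number of vertices m, so θ_T(S) = (m,…,m,1,…,1) with m occurring M ≥ 1 times, and M(m−1) = n − k ≥ 3. -/
/-!
Every edge of the forest `T − S` is a bridge, so `T − S` has `|S| + 1 = k` components, whose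
sizes add up to `n`. Cutting a leaf off a component of size `c ≥ 2` replaces `c` by `1` and
`c − 1` in the multiset of sizes, and comparing the multiplicities of the larger size shows that
cuts in components of sizes `c` and `c'` give the same multiset only if `c = c'`. So all
components with more than one vertex have one common size `m`, and counting vertices gives
`M(m − 1) = n − k`.
-/

open SimpleGraph

/-- A leaf edge of a graph: an edge incident to a vertex of degree 1. -/
def IsLeafEdge {V : Type*} (G : SimpleGraph V) (e : Sym2 V) : Prop :=
  e ∈ G.edgeSet ∧ ∃ v ∈ e, (G.neighborSet v).ncard = 1

section ComponentSizes

variable {V : Type*} [Fintype V] {G : SimpleGraph V}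

lemma compSizes_eq_map (G : SimpleGraph V) [Fintype G.ConnectedComponent] :
    compSizes G = Finset.univ.val.map fun c : G.ConnectedComponent => Nat.card c.supp := by
  rw [compSizes, Subsingleton.elim (Fintype.ofFinite G.ConnectedComponent) ‹_›]

lemma mem_compSizes {a : ℕ} :
    a ∈ compSizes G ↔ ∃ c : G.ConnectedComponent, Nat.card c.supp = a := by
  simp [compSizes]

lemma one_le_of_mem_compSizes {a : ℕ} (ha : a ∈ compSizes G) : 1 ≤ a := by
  obtain ⟨c, rfl⟩ := mem_compSizes.mp ha
  exact Nat.card_pos_iff.mpr ⟨c.nonempty_supp.to_subtype, inferInstance⟩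

lemma card_compSizes (G : SimpleGraph V) : (compSizes G).card = Nat.card G.ConnectedComponent := by
  have := Fintype.ofFinite G.ConnectedComponent
  rw [compSizes_eq_map, Multiset.card_map, Finset.card_val, Finset.card_univ,
    Nat.card_eq_fintype_card]

lemma sum_compSizes (G : SimpleGraph V) : (compSizes G).sum = Fintype.card V := by
  classical
  rw [compSizes_eq_map, ← Finset.sum_eq_multiset_sum, ← Nat.card_eq_fintype_card,
    ← Nat.card_congr (Equiv.sigmaFiberEquiv G.connectedComponentMk), Nat.card_sigma]
  rfl

end ComponentSizes

section BridgeDeletion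

variable {V : Type*} {G : SimpleGraph V} {u v x y : V}

lemma reachable_deleteEdges_or_of_reachable (huv : u ≠ v) (h : G.Reachable x u) :
    (G.deleteEdges {s(u, v)}).Reachable x u ∨ (G.deleteEdges {s(u, v)}).Reachable x v := by
  classical
  obtain ⟨P, hP⟩ := h.exists_isPath
  by_cases heP : s(u, v) ∈ P.edges
  · -- the part of the path before `v` avoids `u`, which is its last vertex
    have hvP := P.snd_mem_support_of_mem_edges heP
    have huP := Walk.endpoint_notMem_support_takeUntil hP hvP huv
    refine .inr ⟨(P.takeUntil v hvP).toDeleteEdges {s(u, v)} fun e he he' => huP ?_⟩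
    rw [Set.mem_singleton_iff] at he'
    exact (P.takeUntil v hvP).fst_mem_support_of_mem_edges (he' ▸ he)
  · exact .inl ⟨P.toDeleteEdges {s(u, v)} fun e he he' => heP (by simp_all)⟩

lemma reachable_deleteEdges_of_not_reachable (hx : ¬G.Reachable x u) (h : G.Reachable x y) :
    (G.deleteEdges {s(u, v)}).Reachable x y := by
  classical
  obtain ⟨P⟩ := h
  refine ⟨P.toDeleteEdges {s(u, v)} fun e he he' => hx ?_⟩
  rw [Set.mem_singleton_iff] at he'
  exact ⟨P.takeUntil u (P.fst_mem_support_of_mem_edges (he' ▸ he))⟩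

lemma map_ofLE_deleteEdges_eq_iff (hadj : G.Adj u v)
    (D : (G.deleteEdges {s(u, v)}).ConnectedComponent) :
    D.map (Hom.ofLE (G.deleteEdges_le _)) = G.connectedComponentMk u ↔
      D = (G.deleteEdges {s(u, v)}).connectedComponentMk u ∨
        D = (G.deleteEdges {s(u, v)}).connectedComponentMk v := by
  induction D using ConnectedComponent.ind with | h x => ?_
  simp only [ConnectedComponent.map_mk, Hom.coe_ofLE, id, ConnectedComponent.eq]
  refine ⟨reachable_deleteEdges_or_of_reachable hadj.ne, ?_⟩
  rintro (h | h)
  · exact h.mono (G.deleteEdges_le _)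
  · exact (h.mono (G.deleteEdges_le _)).trans hadj.symm.reachable

lemma supp_map_ofLE_deleteEdges {D : (G.deleteEdges {s(u, v)}).ConnectedComponent}
    (hD : D.map (Hom.ofLE (G.deleteEdges_le _)) ≠ G.connectedComponentMk u) :
    (D.map (Hom.ofLE (G.deleteEdges_le _))).supp = D.supp := by
  induction D using ConnectedComponent.ind with | h y => ?_
  ext x
  simp only [ConnectedComponent.map_mk, Hom.coe_ofLE, id, ConnectedComponent.mem_supp_iff,
    ConnectedComponent.eq] at hD ⊢
  refine ⟨fun h => reachable_deleteEdges_of_not_reachable (fun hxu => hD ?_) h,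
    fun h => h.mono (G.deleteEdges_le _)⟩
  exact ConnectedComponent.sound (h.symm.trans hxu)

lemma card_supp_deleteEdges_add (hadj : G.Adj u v) (hb : G.IsBridge s(u, v)) [Finite V] :
    Nat.card ((G.deleteEdges {s(u, v)}).connectedComponentMk u).supp +
      Nat.card ((G.deleteEdges {s(u, v)}).connectedComponentMk v).supp =
        Nat.card (G.connectedComponentMk u).supp := by
  have hsupp : (G.connectedComponentMk u).supp =
      ((G.deleteEdges {s(u, v)}).connectedComponentMk u).supp ∪
        ((G.deleteEdges {s(u, v)}).connectedComponentMk v).supp := by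
    ext x
    simpa [eq_comm] using map_ofLE_deleteEdges_eq_iff hadj
      ((G.deleteEdges {s(u, v)}).connectedComponentMk x)
  have hdisj := G.deleteEdges {s(u, v)} |>.pairwise_disjoint_supp_connectedComponent
    (fun h => isBridge_iff.mp hb (ConnectedComponent.exact h))
  simp only [hsupp, Nat.card_coe_set_eq, Set.ncard_union_eq hdisj]

lemma compSizes_deleteEdges_of_isBridge [Fintype V] (hadj : G.Adj u v) (hb : G.IsBridge s(u, v)) :
    compSizes (G.deleteEdges {s(u, v)}) =
      Nat.card ((G.deleteEdges {s(u, v)}).connectedComponentMk u).supp ::ₘ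
        Nat.card ((G.deleteEdges {s(u, v)}).connectedComponentMk v).supp ::ₘ
          (compSizes G).erase (Nat.card (G.connectedComponentMk u).supp) := by
  classical
  set φ : (G.deleteEdges {s(u, v)}).ConnectedComponent → G.ConnectedComponent :=
    ConnectedComponent.map (Hom.ofLE (G.deleteEdges_le _))
  set A := (G.deleteEdges {s(u, v)}).connectedComponentMk u
  set B := (G.deleteEdges {s(u, v)}).connectedComponentMk v
  set C := G.connectedComponentMk u
  have : Fintype (G.deleteEdges {s(u, v)}).ConnectedComponent := Fintype.ofFinite _
  have : Fintype G.ConnectedComponent := Fintype.ofFinite _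
  have hAB : A ≠ B := fun h => isBridge_iff.mp hb (ConnectedComponent.exact h)
  have hfiber : Finset.univ.filter (φ · = C) = {A, B} := by
    ext D
    simp [φ, A, B, C, map_ofLE_deleteEdges_eq_iff hadj]
  have hinj : Set.InjOn φ (Finset.univ.filter (¬φ · = C)) := fun D hD D' hD' h =>
    ConnectedComponent.supp_injective <| by
      rw [← supp_map_ofLE_deleteEdges (Finset.mem_filter.mp hD).2,
        ← supp_map_ofLE_deleteEdges (Finset.mem_filter.mp hD').2]
      exact congrArg _ h
  have himage : (Finset.univ.filter (¬φ · = C)).image φ = Finset.univ.filter (¬· = C) := by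
    ext c
    obtain ⟨D, rfl⟩ := ConnectedComponent.surjective_map_ofLE (G.deleteEdges_le {s(u, v)}) c
    simp only [Finset.mem_image, Finset.mem_filter, Finset.mem_univ, true_and]
    exact ⟨fun ⟨D', hD', h⟩ => h ▸ hD', fun h => ⟨D, h, rfl⟩⟩
  have hrest : (Finset.univ.filter (¬φ · = C)).val.map (fun D => Nat.card D.supp) =
      (Finset.univ.filter (¬· = C)).val.map fun c => Nat.card c.supp := by
    rw [← himage, Finset.image_val_of_injOn hinj, Multiset.map_map]
    refine Multiset.map_congr rfl fun D hD => ?_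
    rw [Function.comp_apply, supp_map_ofLE_deleteEdges (Finset.mem_filter.mp hD).2]
  rw [compSizes_eq_map, compSizes_eq_map, ← Multiset.filter_add_not (φ · = C) Finset.univ.val,
    ← Multiset.filter_add_not (· = C) Finset.univ.val, Multiset.map_add, Multiset.map_add,
    ← Finset.filter_val, ← Finset.filter_val, ← Finset.filter_val, ← Finset.filter_val,
    hfiber, Finset.filter_eq' Finset.univ C, hrest]
  simp [hAB]

end BridgeDeletion

section Leaves

variable {V : Type*} {G : SimpleGraph V} {u v : V}

lemma supp_deleteEdges_of_neighborSet_eq (hnb : G.neighborSet v = {u}) :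
    ((G.deleteEdges {s(u, v)}).connectedComponentMk v).supp = {v} := by
  have hiso (y : V) : ¬(G.deleteEdges {s(u, v)}).Adj v y := by
    intro hy
    obtain ⟨hvy, hne⟩ := (deleteEdges_adj ..).mp hy
    have : y = u := by simpa [hnb] using (mem_neighborSet G v y).mpr hvy
    exact hne (by simp [this, Sym2.eq_swap])
  ext x
  simp only [ConnectedComponent.mem_supp_iff, ConnectedComponent.eq, Set.mem_singleton_iff]
  refine ⟨fun h => ?_, fun h => h ▸ Reachable.rfl⟩
  obtain ⟨p⟩ := h.symm
  cases p with
  | nil => rfl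
  | cons h _ => exact absurd h (hiso _)

lemma compSizes_deleteEdges_of_neighborSet_eq [Fintype V] (hnb : G.neighborSet v = {u}) :
    compSizes (G.deleteEdges {s(u, v)}) =
      1 ::ₘ (Nat.card (G.connectedComponentMk u).supp - 1) ::ₘ
        (compSizes G).erase (Nat.card (G.connectedComponentMk u).supp) := by
  have hadj : G.Adj u v := (G.mem_neighborSet v u).mp (hnb ▸ rfl) |>.symm
  have hleaf := supp_deleteEdges_of_neighborSet_eq hnb
  have hb : G.IsBridge s(u, v) := fun h => hadj.ne <| by
    rw [← Set.mem_singleton_iff, ← hleaf]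
    exact ConnectedComponent.sound h
  have hone : Nat.card ((G.deleteEdges {s(u, v)}).connectedComponentMk v).supp = 1 := by
    rw [hleaf, Nat.card_coe_set_eq, Set.ncard_singleton]
  have hsum := card_supp_deleteEdges_add hadj hb
  rw [hone] at hsum
  rw [compSizes_deleteEdges_of_isBridge hadj hb, hone, Multiset.cons_swap, ← hsum,
    Nat.add_sub_cancel]

lemma exists_neighborSet_eq_singleton_of_isAcyclic [Finite V] (hac : G.IsAcyclic)
    (C : G.ConnectedComponent) (hC : 2 ≤ Nat.card C.supp) :
    ∃ u v, G.neighborSet v = {u} ∧ G.connectedComponentMk v = C := by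
  classical
  have := Fintype.ofFinite V
  have : Nontrivial C.supp := Finite.one_lt_card_iff_nontrivial.mp hC
  obtain ⟨w, -, -, hw, -⟩ := (hac.isTree_connectedComponent C).exists_ne_and_degree_eq_one
  obtain ⟨u, hwu, huniq⟩ := degree_eq_one_iff_existsUnique_adj.mp hw
  refine ⟨u, w, Set.eq_singleton_iff_unique_mem.mpr ⟨hwu, fun y hy => ?_⟩, w.2⟩
  have hyC : y ∈ C := C.mem_supp_of_adj_mem_supp w.2 hy
  exact congrArg Subtype.val (huniq ⟨y, hyC⟩ ((C.toSimpleGraph_adj w.2 hyC).mpr hy))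

end Leaves

section Forests

variable {V : Type*} [Fintype V] {G : SimpleGraph V}

lemma card_compSizes_deleteEdges_of_isAcyclic [DecidableEq V] (hG : G.IsAcyclic)
    {S : Finset (Sym2 V)} (hS : ↑S ⊆ G.edgeSet) :
    (compSizes (G.deleteEdges ↑S)).card = (compSizes G).card + S.card := by
  induction S using Finset.induction_on with
  | empty => simp
  | @insert e S heS ih =>
    cases e with | h u v => ?_
    have hadj : (G.deleteEdges ↑S).Adj u v :=
      (deleteEdges_adj ..).mpr ⟨hS (Finset.mem_coe.mpr (Finset.mem_insert_self _ S)),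
        by simpa using heS⟩
    have hb := isAcyclic_iff_forall_adj_isBridge.mp (hG.anti (G.deleteEdges_le _)) hadj
    have hmem : Nat.card ((G.deleteEdges ↑S).connectedComponentMk u).supp ∈
        compSizes (G.deleteEdges ↑S) := mem_compSizes.mpr ⟨_, rfl⟩
    rw [Finset.coe_insert, Set.insert_eq, Set.union_comm, ← deleteEdges_deleteEdges,
      compSizes_deleteEdges_of_isBridge hadj hb, Multiset.card_cons, Multiset.card_cons,
      Multiset.card_erase_add_one hmem, ih ((Set.subset_insert _ _).trans (by simpa using hS)),
      Finset.card_insert_of_notMem heS, add_assoc]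

lemma card_compSizes_of_connected (hG : G.Connected) : (compSizes G).card = 1 := by
  have := hG.nonempty
  have := hG.preconnected.subsingleton_connectedComponent
  rw [card_compSizes, Nat.card_eq_one_iff_unique]
  exact ⟨inferInstance, inferInstance⟩

lemma exists_isLeafEdge_compSizes_deleteEdges (hG : G.IsAcyclic) {c : ℕ}
    (hc : c ∈ compSizes G) (h2 : 2 ≤ c) :
    ∃ ℓ, IsLeafEdge G ℓ ∧
      compSizes (G.deleteEdges {ℓ}) = 1 ::ₘ (c - 1) ::ₘ (compSizes G).erase c := by
  obtain ⟨C, rfl⟩ := mem_compSizes.mp hc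
  obtain ⟨u, v, hnb, rfl⟩ := exists_neighborSet_eq_singleton_of_isAcyclic hG C h2
  have hadj : G.Adj u v := (G.mem_neighborSet v u).mp (hnb ▸ rfl) |>.symm
  refine ⟨s(u, v), ⟨hadj, v, Sym2.mem_mk_right u v, by rw [hnb, Set.ncard_singleton]⟩, ?_⟩
  rw [compSizes_deleteEdges_of_neighborSet_eq hnb, ConnectedComponent.sound hadj.reachable]

end Forests

lemma theta_insert {V : Type*} [Fintype V] [DecidableEq V] (T : SimpleGraph V)
    (S : Finset (Sym2 V)) (e : Sym2 V) :
    theta T (insert e S) = compSizes ((T.deleteEdges ↑S).deleteEdges {e}) := by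
  rw [theta, deleteEdges_deleteEdges, Finset.coe_insert, Set.insert_eq, Set.union_comm]

namespace Multiset

lemma eq_of_cons_sub_one_erase_eq {t : Multiset ℕ} {a b : ℕ} (ha : a ∈ t) (hb : b ∈ t)
    (h : (a - 1) ::ₘ t.erase a = (b - 1) ::ₘ t.erase b) : a = b := by
  wlog hab : a < b generalizing a b
  · rcases lt_or_eq_of_le (not_lt.mp hab) with hba | rfl
    · exact (this hb ha h.symm hba).symm
    · rfl
  -- the larger value `b` has one copy fewer on the right
  have hcount := congrArg (count b) h
  rw [count_cons, count_cons, count_erase_of_ne hab.ne', count_erase_self] at hcount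
  have := one_le_count_iff_mem.mpr hb
  split_ifs at hcount <;> omega

lemma eq_replicate_add_replicate_one {t : Multiset ℕ} {m : ℕ}
    (h : ∀ a ∈ t, a = m ∨ a = 1) :
    t = replicate (t.count m) m + replicate (card t - t.count m) 1 := by
  have hcard := congrArg card (filter_add_not (· = m) t)
  rw [card_add, filter_eq' t m, card_replicate] at hcard
  conv_lhs => rw [← filter_add_not (· = m) t, filter_eq' t m]
  rw [← hcard, Nat.add_sub_cancel_left, ← eq_replicate_card.mpr]
  intro a ha
  obtain ⟨ha, hne⟩ := mem_filter.mp ha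
  exact (h a ha).resolve_left hne

lemma exists_eq_replicate_add_replicate_one {t : Multiset ℕ} (hpos : ∀ a ∈ t, 1 ≤ a)
    (hbig : ∀ a ∈ t, ∀ b ∈ t, 2 ≤ a → 2 ≤ b → a = b) (hlt : card t < t.sum) :
    ∃ m M, 2 ≤ m ∧ 1 ≤ M ∧ t = replicate M m + replicate (card t - M) 1 ∧
      M * (m - 1) = t.sum - card t := by
  obtain ⟨m, hm, hm2⟩ : ∃ m ∈ t, 2 ≤ m := by
    by_contra! h
    have := sum_le_card_nsmul t 1 fun a ha => Nat.le_of_lt_succ (h a ha)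
    rw [smul_eq_mul, mul_one] at this
    omega
  have ht := eq_replicate_add_replicate_one fun a ha =>
    (le_or_gt 2 a).imp (hbig a ha m hm · hm2) fun h => by have := hpos a ha; omega
  refine ⟨m, t.count m, hm2, one_le_count_iff_mem.mpr hm, ht, ?_⟩
  have hsum := congrArg sum ht
  have hcount := count_le_card m t
  rw [sum_add, sum_replicate, sum_replicate, smul_eq_mul, smul_eq_mul, mul_one] at hsum
  rw [Nat.mul_sub_one]
  omega

end Multiset

/-- If `θ_T(S ∪ {ℓ})` is the same for every leaf edge `ℓ` of `T − S` (with `|S| = k − 1`,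
`k ≤ n − 3`), then all components of `T − S` with more than one vertex have a common size
`m`, so `θ_T(S) = (m,…,m,1,…,1)` with `m` occurring `M ≥ 1` times, and
`M(m − 1) = n − k ≥ 3`. -/
theorem stmt10 {V : Type*} [Fintype V] [DecidableEq V] (T : SimpleGraph V) (hT : T.IsTree)
    (k : ℕ) (hk1 : 1 ≤ k) (hk : k ≤ Fintype.card V - 3)
    (S : Finset (Sym2 V)) (hS : ↑S ⊆ T.edgeSet) (hcard : S.card = k - 1)
    (hsame : ∀ ℓ ℓ' : Sym2 V, IsLeafEdge (T.deleteEdges ↑S) ℓ →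
      IsLeafEdge (T.deleteEdges ↑S) ℓ' → theta T (insert ℓ S) = theta T (insert ℓ' S)) :
    ∃ m M : ℕ, 2 ≤ m ∧ 1 ≤ M ∧
      theta T S = Multiset.replicate M m + Multiset.replicate (k - M) 1 ∧
      M * (m - 1) = Fintype.card V - k ∧ 3 ≤ Fintype.card V - k := by
  have hforest : (T.deleteEdges ↑S).IsAcyclic := hT.isAcyclic.anti (T.deleteEdges_le _)
  have hcardθ : (theta T S).card = k := by
    rw [theta, card_compSizes_deleteEdges_of_isAcyclic hT.isAcyclic hS,
      card_compSizes_of_connected hT.connected, hcard]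
    omega
  have hsum : (theta T S).sum = Fintype.card V := sum_compSizes _
  have huniform : ∀ a ∈ theta T S, ∀ b ∈ theta T S, 2 ≤ a → 2 ≤ b → a = b := by
    intro a ha b hb ha2 hb2
    obtain ⟨ℓ, hℓ, hθℓ⟩ := exists_isLeafEdge_compSizes_deleteEdges hforest ha ha2
    obtain ⟨ℓ', hℓ', hθℓ'⟩ := exists_isLeafEdge_compSizes_deleteEdges hforest hb hb2
    have h := hsame ℓ ℓ' hℓ hℓ'
    rw [theta_insert, theta_insert, hθℓ, hθℓ', Multiset.cons_inj_right] at h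
    exact Multiset.eq_of_cons_sub_one_erase_eq ha hb h
  obtain ⟨m, M, hm, hM, hθ, hMm⟩ :=
    Multiset.exists_eq_replicate_add_replicate_one (t := theta T S)
      (fun a ha => one_le_of_mem_compSizes ha) huniform (by omega)
  rw [hcardθ] at hθ hMm
  rw [hsum] at hMm
  exact ⟨m, M, hm, hM, hθ, hMm, by omega⟩
end

section
/- Labeled (n−2)-cuts do not determine labeled (n−3)-cuts in general: there exist a tree T on n vertices (for some n), and a set S of n−3 edges of T, together with another tree T′ and set S′ of n−3 edges, such that θ_T(S ∪ {x}) = (2,1,…,1) for every remaining edge x of T and likewise for T′, but θ_T(S) = (3,1,…,1) while θ_{T′}(S′) = (2,2,1,…,1). -/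
open SimpleGraph

/-! For `n = 4` take the star `K_{1,3}` with `S` a single edge and the path `P₄` with `S'` its
middle edge. Cutting `S` leaves the centre with two leaves beside an isolated leaf, `(3,1)`;
cutting `S'` leaves two edges, `(2,2)`. Cutting one more edge isolates a further vertex in the
star and splits one of the two edges of the path, so both give `(2,1,1)`. With decidable
adjacency all of these component counts are finite computations. -/

namespace SimpleGraph

instance (n : ℕ) : DecidableRel (pathGraph n).Adj := fun _ _ => decidable_of_iff' _ pathGraph_adj

theorem isTree_pathGraph (n : ℕ) : (pathGraph (n + 1)).IsTree := by
  refine isTree_iff_connected_and_card.mpr ⟨pathGraph_connected n, ?_⟩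
  let step : Fin n → (pathGraph (n + 1)).edgeSet := fun i =>
    ⟨s(i.castSucc, i.succ), by simp [pathGraph_adj]⟩
  have hstep : Function.Bijective step := by
    constructor
    · intro i j h
      simp only [step, Subtype.mk.injEq, Sym2.eq_iff, Fin.ext_iff] at h
      ext; simp at h; omega
    · rintro ⟨e, he⟩
      induction e using Sym2.inductionOn with | hf u v => ?_
      rw [mem_edgeSet, pathGraph_adj] at he
      rcases he with h | h
      · exact ⟨⟨u, by omega⟩, by ext; simp [step, Fin.ext_iff]; omega⟩
      · exact ⟨⟨v, by omega⟩, by ext; simp [step, Fin.ext_iff]; omega⟩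
  rw [← Nat.card_eq_of_bijective step hstep, Nat.card_eq_fintype_card, Fintype.card_fin,
    Nat.card_eq_fintype_card, Fintype.card_fin]

end SimpleGraph

lemma compSizes_eq_map_card_filter {V : Type*} [Fintype V] [DecidableEq V] (G : SimpleGraph V)
    [DecidableRel G.Adj] :
    compSizes G = (Finset.univ : Finset G.ConnectedComponent).val.map
      fun c => (Finset.univ.filter (· ∈ c.supp)).card := by
  unfold compSizes
  rw [Subsingleton.elim (Fintype.ofFinite G.ConnectedComponent) inferInstance]
  refine Multiset.map_congr rfl fun c _ => ?_
  rw [Nat.card_eq_card_toFinset]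
  congr 1
  ext v
  simp

/-- Labeled `(n−2)`-cuts do not determine labeled `(n−3)`-cuts: there are trees `T, T'` and
sets `S, S'` of `n − 3` edges whose one-further-edge cuts all give `(2,1,…,1)`, but with
`θ_T(S) = (3,1,…,1)` and `θ_{T'}(S') = (2,2,1,…,1)`. -/
theorem stmt12 :
    ∃ (n : ℕ) (T T' : SimpleGraph (Fin n)) (S S' : Finset (Sym2 (Fin n))),
      T.IsTree ∧ T'.IsTree ∧
      ↑S ⊆ T.edgeSet ∧ S.card = n - 3 ∧
      ↑S' ⊆ T'.edgeSet ∧ S'.card = n - 3 ∧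
      (∀ x ∈ T.edgeSet, x ∉ S →
        theta T (insert x S) = 2 ::ₘ Multiset.replicate (n - 2) 1) ∧
      (∀ x ∈ T'.edgeSet, x ∉ S' →
        theta T' (insert x S') = 2 ::ₘ Multiset.replicate (n - 2) 1) ∧
      theta T S = 3 ::ₘ Multiset.replicate (n - 3) 1 ∧
      theta T' S' = 2 ::ₘ 2 ::ₘ Multiset.replicate (n - 4) 1 := by
  refine ⟨4, starGraph 0, pathGraph 4, {s(0,1)}, {s(1,2)}, isTree_starGraph 0,
    isTree_pathGraph 3, ?_, rfl, ?_, rfl, ?_, ?_, ?_, ?_⟩ <;>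
  simp only [theta, compSizes_eq_map_card_filter, Finset.coe_singleton,
    Set.singleton_subset_iff, ← mem_edgeFinset] <;>
  decide
end
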